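/- arXiv:2402.16133 — 2 statements merged into one kernel-verified Lean document; each statement's English description precedes it below -/
import Mathlib

section
/- Let p(·) be a measurable exponent with 0 < p₋ ≤ p₊ < ∞, b a slowly varying function, θ with 0 < θ < min{p₋, 1}, and (A_i)_{i∈ℕ} arbitrary measurable sets in a probability space. Then ‖∑_i χ_{A_i}‖_{p(·)}^θ γ_b^θ(‖∑_i χ_{A_i}‖_{p(·)}) ≲ ∑_i ‖χ_{A_i}‖_{p(·)}^θ γ_b^θ(‖χ_{A_i}‖_{p(·)}). -/
open MeasureTheory Set ENNReal Filter Topology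

noncomputable section

/-- A measurable function `b : [1,∞) → (0,∞)` is slowly varying if for every `ε > 0`,
`t ^ ε * b t` is equivalent (up to multiplicative constants) to a nondecreasing function
and `t ^ (-ε) * b t` is equivalent to a nonincreasing function on `[1,∞)`. -/
def SlowlyVarying (b : ℝ → ℝ) : Prop :=
  (∀ t : ℝ, 1 ≤ t → 0 < b t) ∧
  ∀ ε : ℝ, 0 < ε →
    ((∃ g : ℝ → ℝ, MonotoneOn g (Set.Ici 1) ∧ ∃ c > (0:ℝ), ∃ C > (0:ℝ),
        ∀ t : ℝ, 1 ≤ t → c * g t ≤ t ^ ε * b t ∧ t ^ ε * b t ≤ C * g t) ∧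
     (∃ g : ℝ → ℝ, AntitoneOn g (Set.Ici 1) ∧ ∃ c > (0:ℝ), ∃ C > (0:ℝ),
        ∀ t : ℝ, 1 ≤ t → c * g t ≤ t ^ (-ε) * b t ∧ t ^ (-ε) * b t ≤ C * g t))

/-- `γ_b(t) = b (max {t, t⁻¹})` for `t > 0`. -/
def gammaB (b : ℝ → ℝ) (t : ℝ) : ℝ := b (max t t⁻¹)

variable {Ω : Type*} [MeasurableSpace Ω]

/-- The variable Lebesgue quasi-norm
`‖f‖_{p(·)} = inf {λ > 0 : ∫ (|f|/λ)^{p(·)} dμ ≤ 1}`. -/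
def vLpNorm (μ : Measure Ω) (p : Ω → ℝ) (f : Ω → ℝ) : ℝ :=
  sInf {lam : ℝ | 0 < lam ∧ ∫⁻ ω, ENNReal.ofReal ((|f ω| / lam) ^ p ω) ∂μ ≤ 1}

/-- `f ∈ L_{p(·)}` : the modular is finite for some `λ > 0`. -/
def MemVLp (μ : Measure Ω) (p : Ω → ℝ) (f : Ω → ℝ) : Prop :=
  ∃ lam > (0:ℝ), ∫⁻ ω, ENNReal.ofReal ((|f ω| / lam) ^ p ω) ∂μ ≤ 1

/-- `‖χ_A‖_{p(·)}`. -/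
def chiNorm (μ : Measure Ω) (p : Ω → ℝ) (A : Set Ω) : ℝ :=
  vLpNorm μ p (A.indicator 1)

/-- The variable Lorentz–Karamata quasi-norm `‖f‖_{p(·),q,b}` (with `q ∈ (0,∞]`). -/
def vLKNorm (μ : Measure Ω) (p : Ω → ℝ) (q : ℝ≥0∞) (b : ℝ → ℝ) (f : Ω → ℝ) : ℝ≥0∞ :=
  if q = ∞ then
    ⨆ t ∈ Set.Ioi (0:ℝ), ENNReal.ofReal
      (t * chiNorm μ p {ω | t < |f ω|} * gammaB b (chiNorm μ p {ω | t < |f ω|}))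
  else
    (∫⁻ t in Set.Ioi (0:ℝ), ENNReal.ofReal
      ((t * chiNorm μ p {ω | t < |f ω|} * gammaB b (chiNorm μ p {ω | t < |f ω|})) ^ q.toReal / t))
      ^ (1 / q.toReal)


/-!
Fix `ε ∈ (0, 1]` with `η := θ (1 + ε) ≤ min {p₋, 1}`. The first step is the countable
`η`-triangle inequality `‖∑ χ_{A_i}‖ ^ η ≤ ∑ ‖χ_{A_i}‖ ^ η`: if `lᵢ` are admissible levels for
`χ_{A_i}` with `∑ lᵢ ^ η ≤ λ ^ η`, then at a point lying in exactly `n` of the sets, indexed by `F`,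
the power mean inequality gives `(n / λ) ^ p ≤ ∑_{i ∈ F} (lᵢ / λ) ^ η · lᵢ ^ (-p)`, and integrating
shows that `λ` is admissible for `∑ χ_{A_i}`.

The second step uses the Potter bounds of `γ_b`: `t ^ ε γ_b(t)` is almost increasing and
`t ^ (-ε) γ_b(t)` almost decreasing. Write `T := ‖∑ χ_{A_i}‖` and `tᵢ := ‖χ_{A_i}‖`. If `T ≤ tⱼ` for
some `j`, the first bound gives `T γ_b(T) ≲ tⱼ γ_b(tⱼ)`. Otherwise every `tᵢ ≤ T`, the second bound
gives `tᵢ ^ η · (T ^ (-ε) γ_b(T)) ^ θ ≲ tᵢ ^ θ γ_b(tᵢ) ^ θ`, and summing over `i` with the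
`η`-triangle inequality yields `T ^ θ γ_b(T) ^ θ ≲ ∑ tᵢ ^ θ γ_b(tᵢ) ^ θ`.
-/

open Finset in
theorem card_rpow_le_sum_mul_inv_rpow {ι : Type*} (F : Finset ι) {c : ι → ℝ}
    (hc : ∀ i ∈ F, 0 < c i) (hsum : ∑ i ∈ F, c i ≤ 1) {r : ℝ} (hr : 1 ≤ r) :
    (#F : ℝ) ^ r ≤ ∑ i ∈ F, c i * (c i)⁻¹ ^ r := by
  rcases F.eq_empty_or_nonempty with rfl | hF
  · simp [Real.zero_rpow (by linarith : r ≠ 0)]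
  set C := ∑ i ∈ F, c i
  have hC : 0 < C := Finset.sum_pos hc hF
  have hmean := Real.rpow_arith_mean_le_arith_mean_rpow F (fun i => c i / C) (fun i => (c i)⁻¹)
    (fun i hi => (div_pos (hc i hi) hC).le) (by rw [← Finset.sum_div, div_self hC.ne'])
    (fun i hi => (inv_pos.2 (hc i hi)).le) hr
  have hw : ∀ i ∈ F, c i / C * (c i)⁻¹ = C⁻¹ := fun i hi => by field_simp [(hc i hi).ne']
  rw [Finset.sum_congr rfl hw, Finset.sum_const, nsmul_eq_mul] at hmean
  simp only [div_mul_eq_mul_div, ← Finset.sum_div] at hmean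
  calc (#F : ℝ) ^ r ≤ (#F : ℝ) ^ r * C ^ (1 - r) := le_mul_of_one_le_right (by positivity)
        (Real.one_le_rpow_of_pos_of_le_one_of_nonpos hC hsum (by linarith))
    _ = C * (#F * C⁻¹) ^ r := by
        rw [Real.rpow_sub hC, Real.rpow_one, Real.mul_rpow (by positivity) (by positivity),
          Real.inv_rpow hC.le]
        ring
    _ ≤ C * ((∑ i ∈ F, c i * (c i)⁻¹ ^ r) / C) := mul_le_mul_of_nonneg_left hmean hC.le
    _ = _ := by field_simp

open Finset in
theorem card_div_rpow_le_sum {ι : Type*} (F : Finset ι) {lam : ℝ} (hlam : 0 < lam) {l : ι → ℝ}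
    (hl : ∀ i ∈ F, 0 < l i) {η s : ℝ} (hη0 : 0 < η) (hη1 : η ≤ 1) (hηs : η ≤ s)
    (hsum : ∑ i ∈ F, (l i / lam) ^ η ≤ 1) :
    (#F / lam) ^ s ≤ ∑ i ∈ F, (l i / lam) ^ η * (l i)⁻¹ ^ s := by
  have hs : 0 < s := hη0.trans_le hηs
  rcases F.eq_empty_or_nonempty with rfl | hF
  · simp [Real.zero_rpow hs.ne']
  have hl' : ∀ i ∈ F, 0 < l i / lam := fun i hi => div_pos (hl i hi) hlam
  have hkey := card_rpow_le_sum_mul_inv_rpow F (fun i hi => Real.rpow_pos_of_pos (hl' i hi) η)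
    hsum ((one_le_div hη0).2 hηs)
  have hterm : ∀ i ∈ F, (l i / lam) ^ η * ((l i / lam) ^ η)⁻¹ ^ (s / η) =
      lam ^ s * ((l i / lam) ^ η * (l i)⁻¹ ^ s) := fun i hi => by
    rw [← Real.inv_rpow (hl' i hi).le, ← Real.rpow_mul (inv_nonneg.2 (hl' i hi).le),
      mul_div_cancel₀ _ hη0.ne', inv_div, Real.div_rpow hlam.le (hl i hi).le,
      Real.inv_rpow (hl i hi).le]
    ring
  rw [Finset.sum_congr rfl hterm, ← Finset.mul_sum] at hkey
  calc (#F / lam) ^ s = (#F : ℝ) ^ s * (lam ^ s)⁻¹ := by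
        rw [Real.div_rpow (by positivity) hlam.le, div_eq_mul_inv]
    _ ≤ (#F : ℝ) ^ (s / η) * (lam ^ s)⁻¹ := by
        gcongr
        · exact_mod_cast hF.card_pos
        · exact (le_div_iff₀ hη0).2 (mul_le_of_le_one_right hs.le hη1)
    _ ≤ (lam ^ s * ∑ i ∈ F, (l i / lam) ^ η * (l i)⁻¹ ^ s) * (lam ^ s)⁻¹ := by gcongr
    _ = _ := by field_simp

-- The lower integral is not additive on non-measurable functions, but it is subadditive on
-- monotone functions of one `p`: a simple function `g ≤ ∑ ρᵢ ∘ p` splits, through the least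
-- level `m` at which `∑ ρᵢ` reaches it, into the simple functions `ρᵢ ∘ m ∘ g ≤ ρᵢ ∘ p`.
theorem lintegral_finsetSum_comp_le {ι : Type*} (s : Finset ι) {ρ : ι → ℝ → ℝ≥0∞}
    (hρ : ∀ i ∈ s, Monotone (ρ i)) (hρc : ∀ i ∈ s, Continuous (ρ i)) {μ : Measure Ω}
    {p : Ω → ℝ} {a : ℝ} (hp : ∀ᵐ ω ∂μ, a ≤ p ω) :
    ∫⁻ ω, ∑ i ∈ s, ρ i (p ω) ∂μ ≤ ∑ i ∈ s, ∫⁻ ω, ρ i (p ω) ∂μ := by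
  set χ : ℝ → ℝ≥0∞ := fun x => ∑ i ∈ s, ρ i x
  have hχ : Continuous χ := continuous_finsetSum s hρc
  set m : ℝ≥0∞ → ℝ := fun y => sInf {x | a ≤ x ∧ y ≤ χ x}
  have hm : ∀ y x, a ≤ x → y ≤ χ x → m y ≤ x ∧ y ≤ χ (m y) := by
    intro y x hax hyx
    have hS : IsClosed {x | a ≤ x ∧ y ≤ χ x} :=
      (isClosed_le continuous_const continuous_id).inter (isClosed_le continuous_const hχ)
    have hbdd : BddBelow {x | a ≤ x ∧ y ≤ χ x} := ⟨a, fun x hx => hx.1⟩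
    exact ⟨csInf_le hbdd ⟨hax, hyx⟩, (hS.csInf_mem ⟨x, hax, hyx⟩ hbdd).2⟩
  rw [lintegral_def]
  refine iSup₂_le fun g hg => ?_
  calc g.lintegral μ = ∫⁻ ω, g ω ∂μ := (g.lintegral_eq_lintegral μ).symm
    _ ≤ ∫⁻ ω, ∑ i ∈ s, (g.map (ρ i ∘ m)) ω ∂μ := lintegral_mono_ae <| by
        filter_upwards [hp] with ω hω
        simpa using (hm _ _ hω (hg ω)).2
    _ = ∑ i ∈ s, ∫⁻ ω, (g.map (ρ i ∘ m)) ω ∂μ :=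
        lintegral_finsetSum s fun i _ => (g.map _).measurable
    _ ≤ _ := Finset.sum_le_sum fun i hi => lintegral_mono_ae <| by
        filter_upwards [hp] with ω hω
        simpa using hρ i hi (hm _ _ hω (hg ω)).1

section Patterns

variable {α ι : Type*}

def patternSet (A : ι → Set α) (F : Finset ι) : Set α := {ω | ∀ i, ω ∈ A i ↔ i ∈ F}

variable {A : ι → Set α}

theorem measurableSet_patternSet [MeasurableSpace α] [Countable ι]
    (hA : ∀ i, MeasurableSet (A i)) (F : Finset ι) : MeasurableSet (patternSet A F) := by
  simp only [patternSet, Set.ofPred_forall]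
  refine MeasurableSet.iInter fun i => ?_
  by_cases hi : i ∈ F
  · convert hA i using 1; ext; simp [hi]
  · convert (hA i).compl using 1; ext; simp [hi]

theorem pairwise_disjoint_patternSet (A : ι → Set α) :
    Pairwise (Function.onFun Disjoint (patternSet A)) := fun _ _ hFG =>
  Set.disjoint_left.2 fun _ hF hG => hFG (Finset.ext fun i => (hF i).symm.trans (hG i))

theorem patternSet_inter_of_mem {F : Finset ι} {i : ι} (hi : i ∈ F) :
    patternSet A F ∩ A i = patternSet A F :=
  Set.inter_eq_left.2 fun _ hω => (hω i).2 hi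

theorem patternSet_inter_of_notMem {F : Finset ι} {i : ι} (hi : i ∉ F) :
    patternSet A F ∩ A i = ∅ :=
  Set.eq_empty_of_forall_notMem fun _ hω => hi ((hω.1 i).1 hω.2)

theorem tsum_indicator_of_mem_patternSet {F : Finset ι} {ω : α} (hω : ω ∈ patternSet A F) :
    ∑' i, (A i).indicator (1 : α → ℝ) ω = F.card := by
  classical
  rw [tsum_eq_sum (s := F) fun i hi => Set.indicator_of_notMem (fun h => hi ((hω i).1 h)) _]
  rw [Finset.sum_congr rfl fun i hi => Set.indicator_of_mem ((hω i).2 hi) _]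
  simp

-- `ω` lies in infinitely many `A i`, so the series diverges and `tsum` takes its junk value `0`.
theorem tsum_indicator_of_notMem_iUnion_patternSet {ω : α}
    (hω : ω ∉ ⋃ F, patternSet A F) : ∑' i, (A i).indicator (1 : α → ℝ) ω = 0 := by
  refine tsum_eq_zero_of_not_summable fun hs => hω ?_
  have hfin : {i | ω ∈ A i}.Finite :=
    (Filter.eventually_cofinite.1
      (hs.tendsto_cofinite_zero.eventually (gt_mem_nhds one_pos))).subset
      fun i (hi : ω ∈ A i) => by simp [Set.indicator_of_mem hi]
  exact Set.mem_iUnion.2 ⟨hfin.toFinset, fun i => by simp⟩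

end Patterns

theorem ofReal_rpow_le_of_forall_lt_ofReal_rpow {T η : ℝ} {S : ℝ≥0∞} (hT : 0 ≤ T) (hη : 0 < η)
    (h : ∀ lam, 0 < lam → S < ENNReal.ofReal (lam ^ η) → T ≤ lam) :
    ENNReal.ofReal (T ^ η) ≤ S := by
  by_contra! hlt
  obtain ⟨u, hu0, hSu, huT⟩ := ENNReal.lt_iff_exists_real_btwn.1 hlt
  have hu : 0 < u := by
    by_contra! h
    simp [ENNReal.ofReal_eq_zero.2 h] at hSu
  have hinv : (u ^ η⁻¹) ^ η = u := by
    rw [← Real.rpow_mul hu0, inv_mul_cancel₀ hη.ne', Real.rpow_one]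
  have hTu := Real.rpow_le_rpow hT (h (u ^ η⁻¹) (by positivity) (by rwa [hinv])) hη.le
  rw [hinv] at hTu
  exact (ENNReal.ofReal_le_ofReal hTu).not_gt huT

section VariableLebesgue

variable {μ : Measure Ω} {p : Ω → ℝ}

theorem vLpNorm_nonneg (μ : Measure Ω) (p : Ω → ℝ) (f : Ω → ℝ) : 0 ≤ vLpNorm μ p f :=
  Real.sInf_nonneg fun _ hx => hx.1.le

theorem vLpNorm_le {f : Ω → ℝ} {lam : ℝ} (hlam : 0 < lam)
    (h : ∫⁻ ω, ENNReal.ofReal ((|f ω| / lam) ^ p ω) ∂μ ≤ 1) : vLpNorm μ p f ≤ lam :=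
  csInf_le ⟨0, fun _ hx => hx.1.le⟩ ⟨hlam, h⟩

theorem chiNorm_nonneg (μ : Measure Ω) (p : Ω → ℝ) (A : Set Ω) : 0 ≤ chiNorm μ p A :=
  vLpNorm_nonneg μ p _

theorem lintegral_indicator_div_rpow (hp : ∀ᵐ ω ∂μ, 0 < p ω) {A : Set Ω} (hA : MeasurableSet A)
    (lam : ℝ) :
    ∫⁻ ω, ENNReal.ofReal ((|A.indicator 1 ω| / lam) ^ p ω) ∂μ =
      ∫⁻ ω in A, ENNReal.ofReal (lam⁻¹ ^ p ω) ∂μ := by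
  rw [← lintegral_indicator hA]
  refine lintegral_congr_ae (hp.mono fun ω hω => ?_)
  by_cases h : ω ∈ A <;> simp [h, Real.zero_rpow hω.ne']

theorem exists_setLIntegral_inv_rpow_le_one_of_chiNorm_lt [IsProbabilityMeasure μ]
    (hp : ∀ᵐ ω ∂μ, 0 < p ω) {A : Set Ω} (hA : MeasurableSet A) {u : ℝ} (hu : chiNorm μ p A < u) :
    ∃ l, 0 < l ∧ l ≤ 1 ∧ l < u ∧ ∫⁻ ω in A, ENNReal.ofReal (l⁻¹ ^ p ω) ∂μ ≤ 1 := by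
  have h₁ : ∫⁻ ω in A, ENNReal.ofReal ((1 : ℝ)⁻¹ ^ p ω) ∂μ ≤ 1 := by simp [prob_le_one]
  obtain ⟨l, ⟨hl0, hlA⟩, hlu⟩ := exists_lt_of_csInf_lt
    (s := {lam | 0 < lam ∧ ∫⁻ ω, ENNReal.ofReal ((|A.indicator 1 ω| / lam) ^ p ω) ∂μ ≤ 1})
    ⟨1, one_pos, by rwa [lintegral_indicator_div_rpow hp hA]⟩ hu
  rw [lintegral_indicator_div_rpow hp hA] at hlA
  rcases le_total l 1 with hl1 | hl1
  · exact ⟨l, hl0, hl1, hlu, hlA⟩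
  · exact ⟨1, one_pos, le_rfl, hl1.trans_lt hlu, h₁⟩

theorem exists_rpow_lt_chiNorm_rpow_add [IsProbabilityMeasure μ] (hp : ∀ᵐ ω ∂μ, 0 < p ω)
    {A : Set Ω} (hA : MeasurableSet A) {η : ℝ} (hη : 0 < η) {δ : ℝ} (hδ : 0 < δ) :
    ∃ l, 0 < l ∧ l ≤ 1 ∧ l ^ η < chiNorm μ p A ^ η + δ ∧
      ∫⁻ ω in A, ENNReal.ofReal (l⁻¹ ^ p ω) ∂μ ≤ 1 := by
  set t := chiNorm μ p A
  have ht0 : 0 ≤ t := chiNorm_nonneg μ p A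
  have hinv : ∀ {x : ℝ}, 0 ≤ x → (x ^ η⁻¹) ^ η = x := fun hx => by
    rw [← Real.rpow_mul hx, inv_mul_cancel₀ hη.ne', Real.rpow_one]
  have ht : t < (t ^ η + δ) ^ η⁻¹ := by
    rw [← Real.rpow_lt_rpow_iff ht0 (by positivity) hη, hinv (by positivity)]
    linarith
  obtain ⟨l, hl0, hl1, hlt, hlA⟩ := exists_setLIntegral_inv_rpow_le_one_of_chiNorm_lt hp hA ht
  refine ⟨l, hl0, hl1, ?_, hlA⟩
  rw [← hinv (by positivity : 0 ≤ t ^ η + δ)]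
  exact Real.rpow_lt_rpow hl0.le hlt hη

variable {ι : Type*} [Countable ι] {A : ι → Set Ω}

theorem setLIntegral_patternSet_le (hA : ∀ i, MeasurableSet (A i)) {η : ℝ} (hη0 : 0 < η)
    (hη1 : η ≤ 1) (hp : ∀ᵐ ω ∂μ, η ≤ p ω) {lam : ℝ} (hlam : 0 < lam) {l : ι → ℝ}
    (hl0 : ∀ i, 0 < l i) (hl1 : ∀ i, l i ≤ 1) {F : Finset ι}
    (hF : ∑ i ∈ F, (l i / lam) ^ η ≤ 1) :
    ∫⁻ ω in patternSet A F,
        ENNReal.ofReal ((|∑' i, (A i).indicator (1 : Ω → ℝ) ω| / lam) ^ p ω) ∂μ ≤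
      ∑' i, ENNReal.ofReal ((l i / lam) ^ η) *
        ∫⁻ ω in patternSet A F ∩ A i, ENNReal.ofReal ((l i)⁻¹ ^ p ω) ∂μ := by
  set c : ι → ℝ≥0∞ := fun i => ENNReal.ofReal ((l i / lam) ^ η)
  calc _ ≤ ∫⁻ ω in patternSet A F, ∑ i ∈ F, c i * ENNReal.ofReal ((l i)⁻¹ ^ p ω) ∂μ := by
        refine lintegral_mono_ae ?_
        filter_upwards [ae_restrict_mem (measurableSet_patternSet hA F), ae_restrict_of_ae hp]
          with ω hωF hηω
        simp only [c, tsum_indicator_of_mem_patternSet hωF, Nat.abs_cast]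
        rw [Finset.sum_congr rfl fun i _ =>
            (ENNReal.ofReal_mul (by have := hl0 i; positivity)).symm,
          ← ENNReal.ofReal_sum_of_nonneg fun i _ => by have := hl0 i; positivity]
        exact ENNReal.ofReal_le_ofReal
          (card_div_rpow_le_sum F hlam (fun i _ => hl0 i) hη0 hη1 hηω hF)
    _ ≤ ∑ i ∈ F, ∫⁻ ω in patternSet A F, c i * ENNReal.ofReal ((l i)⁻¹ ^ p ω) ∂μ :=
        lintegral_finsetSum_comp_le F (ρ := fun i x => c i * ENNReal.ofReal ((l i)⁻¹ ^ x))
          (fun i _ x y hxy => mul_le_mul_right (ENNReal.ofReal_le_ofReal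
            (Real.rpow_le_rpow_of_exponent_le ((one_le_inv₀ (hl0 i)).2 (hl1 i)) hxy)) _)
          (fun i _ => (ENNReal.continuous_const_mul ENNReal.ofReal_ne_top).comp
            (ENNReal.continuous_ofReal.comp (continuous_const.rpow continuous_id
              fun _ => Or.inl (inv_ne_zero (hl0 i).ne'))))
          (ae_restrict_of_ae hp)
    _ = _ := by
        rw [tsum_eq_sum (s := F) fun i hi => by
          rw [patternSet_inter_of_notMem hi, Measure.restrict_empty, lintegral_zero_measure,
            mul_zero]]
        refine Finset.sum_congr rfl fun i hi => ?_
        rw [patternSet_inter_of_mem hi, lintegral_const_mul' _ _ ENNReal.ofReal_ne_top]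

theorem lintegral_tsum_indicator_div_rpow_le_one (hA : ∀ i, MeasurableSet (A i)) {η : ℝ}
    (hη0 : 0 < η) (hη1 : η ≤ 1) (hp : ∀ᵐ ω ∂μ, η ≤ p ω) {lam : ℝ} (hlam : 0 < lam)
    {l : ι → ℝ} (hl0 : ∀ i, 0 < l i) (hl1 : ∀ i, l i ≤ 1)
    (hlA : ∀ i, ∫⁻ ω in A i, ENNReal.ofReal ((l i)⁻¹ ^ p ω) ∂μ ≤ 1)
    (hsum : ∑' i, ENNReal.ofReal ((l i / lam) ^ η) ≤ 1) :
    ∫⁻ ω, ENNReal.ofReal ((|∑' i, (A i).indicator (1 : Ω → ℝ) ω| / lam) ^ p ω) ∂μ ≤ 1 := by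
  set Φ : Ω → ℝ≥0∞ :=
    fun ω => ENNReal.ofReal ((|∑' i, (A i).indicator (1 : Ω → ℝ) ω| / lam) ^ p ω)
  set c : ι → ℝ≥0∞ := fun i => ENNReal.ofReal ((l i / lam) ^ η)
  have hP := measurableSet_patternSet hA
  have hU : MeasurableSet (⋃ F, patternSet A F) := MeasurableSet.iUnion hP
  have hsumF : ∀ F : Finset ι, ∑ i ∈ F, (l i / lam) ^ η ≤ 1 := fun F => by
    rw [← ENNReal.ofReal_le_one, ENNReal.ofReal_sum_of_nonneg fun i _ => by
      have := hl0 i; positivity]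
    exact (ENNReal.sum_le_tsum F).trans hsum
  have hΦ : ∫⁻ ω, Φ ω ∂μ = ∫⁻ ω in ⋃ F, patternSet A F, Φ ω ∂μ := by
    rw [← lintegral_add_compl Φ hU, setLIntegral_congr_fun_ae hU.compl (g := fun _ => 0)
      (hp.mono fun ω hω hωU => by
        simp [Φ, tsum_indicator_of_notMem_iUnion_patternSet hωU,
          Real.zero_rpow (hη0.trans_le hω).ne']),
      lintegral_zero, add_zero]
  calc ∫⁻ ω, Φ ω ∂μ = ∑' F, ∫⁻ ω in patternSet A F, Φ ω ∂μ := by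
        rw [hΦ, lintegral_iUnion hP (pairwise_disjoint_patternSet A)]
    _ ≤ ∑' F, ∑' i, c i * ∫⁻ ω in patternSet A F ∩ A i, ENNReal.ofReal ((l i)⁻¹ ^ p ω) ∂μ :=
        ENNReal.tsum_le_tsum fun F =>
          setLIntegral_patternSet_le hA hη0 hη1 hp hlam hl0 hl1 (hsumF F)
    _ = ∑' i, c i * ∫⁻ ω in ⋃ F, patternSet A F ∩ A i, ENNReal.ofReal ((l i)⁻¹ ^ p ω) ∂μ := by
        rw [ENNReal.tsum_comm]
        refine tsum_congr fun i => ?_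
        rw [ENNReal.tsum_mul_left, lintegral_iUnion (fun F => (hP F).inter (hA i))
          fun F G hFG => (pairwise_disjoint_patternSet A hFG).mono Set.inter_subset_left
            Set.inter_subset_left]
    _ ≤ ∑' i, c i * 1 := by
        gcongr with i
        exact (lintegral_mono_set (Set.iUnion_subset fun F => Set.inter_subset_right)).trans
          (hlA i)
    _ ≤ 1 := by simpa using hsum

theorem ofReal_vLpNorm_tsum_indicator_rpow_le [IsProbabilityMeasure μ]
    (hA : ∀ i, MeasurableSet (A i)) {η : ℝ} (hη0 : 0 < η) (hη1 : η ≤ 1)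
    (hp : ∀ᵐ ω ∂μ, η ≤ p ω) :
    ENNReal.ofReal (vLpNorm μ p (fun ω => ∑' i, (A i).indicator (1 : Ω → ℝ) ω) ^ η) ≤
      ∑' i, ENNReal.ofReal (chiNorm μ p (A i) ^ η) := by
  set S := ∑' i, ENNReal.ofReal (chiNorm μ p (A i) ^ η)
  refine ofReal_rpow_le_of_forall_lt_ofReal_rpow (vLpNorm_nonneg μ p _) hη0 fun lam hlam hS => ?_
  obtain ⟨δ, hδ0, hδ⟩ := ENNReal.exists_pos_sum_of_countable (tsub_pos_of_lt hS).ne' ι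
  choose l hl0 hl1 hlη hlA using fun i =>
    exists_rpow_lt_chiNorm_rpow_add (hp.mono fun ω h => hη0.trans_le h) (hA i) hη0
      (NNReal.coe_pos.2 (hδ0 i))
  refine vLpNorm_le hlam
    (lintegral_tsum_indicator_div_rpow_le_one hA hη0 hη1 hp hlam hl0 hl1 hlA ?_)
  have hsum_l : ∑' i, ENNReal.ofReal (l i ^ η) ≤ ENNReal.ofReal (lam ^ η) := calc
    _ ≤ ∑' i, (ENNReal.ofReal (chiNorm μ p (A i) ^ η) + δ i) := ENNReal.tsum_le_tsum fun i => by
        rw [← ENNReal.ofReal_coe_nnreal, ← ENNReal.ofReal_add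
          (Real.rpow_nonneg (chiNorm_nonneg μ p (A i)) η) (δ i).coe_nonneg]
        exact ENNReal.ofReal_le_ofReal (hlη i).le
    _ = S + ∑' i, (δ i : ℝ≥0∞) := ENNReal.tsum_add
    _ ≤ S + (ENNReal.ofReal (lam ^ η) - S) := by gcongr
    _ = ENNReal.ofReal (lam ^ η) := add_tsub_cancel_of_le hS.le
  calc ∑' i, ENNReal.ofReal ((l i / lam) ^ η)
      = (∑' i, ENNReal.ofReal (l i ^ η)) * (ENNReal.ofReal (lam ^ η))⁻¹ := by
        simp_rw [Real.div_rpow (hl0 _).le hlam.le,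
          ENNReal.ofReal_div_of_pos (by positivity : 0 < lam ^ η), div_eq_mul_inv]
        exact ENNReal.tsum_mul_right
    _ ≤ 1 := ENNReal.div_le_of_le_mul (by simpa using hsum_l)

end VariableLebesgue

def PotterBounds (f : ℝ → ℝ) (ε D : ℝ) : Prop :=
  ∀ ⦃s t : ℝ⦄, 0 < s → s ≤ t →
    s ^ ε * f s ≤ D * (t ^ ε * f t) ∧ t ^ (-ε) * f t ≤ D * (s ^ (-ε) * f s)

theorem one_le_max_self_inv {t : ℝ} (ht : 0 < t) : 1 ≤ max t t⁻¹ := by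
  rcases le_total 1 t with h | h
  · exact h.trans (le_max_left _ _)
  · exact ((one_le_inv₀ ht).2 h).trans (le_max_right _ _)

namespace SlowlyVarying

variable {b : ℝ → ℝ}

theorem exists_le_mul_rpow_mul (hb : SlowlyVarying b) {ε : ℝ} (hε : 0 < ε) :
    ∃ D > 0, ∀ ⦃k u v : ℝ⦄, 1 ≤ u → 1 ≤ v → u ≤ k * v → v ≤ k * u →
      b u ≤ D * k ^ ε * b v := by
  obtain ⟨hb0, hbε⟩ := hb
  obtain ⟨⟨g, hg, c₁, hc₁, C₁, hC₁, hgb⟩, ⟨h, hh, c₂, hc₂, C₂, hC₂, hhb⟩⟩ := hbε ε hε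
  refine ⟨max (C₁ / c₁) (C₂ / c₂), lt_max_of_lt_left (by positivity), ?_⟩
  intro k u v hu hv huv hvu
  have hu0 : 0 < u := one_pos.trans_le hu
  have hv0 : 0 < v := one_pos.trans_le hv
  have hbv := (hb0 v hv).le
  rcases le_total u v with h_le | h_le
  · have key : u ^ ε * b u ≤ C₁ / c₁ * (v ^ ε * b v) := calc
      u ^ ε * b u ≤ C₁ * g u := (hgb u hu).2
      _ ≤ C₁ * g v := by gcongr; exact hg hu hv h_le
      _ = C₁ / c₁ * (c₁ * g v) := by field_simp
      _ ≤ C₁ / c₁ * (v ^ ε * b v) := mul_le_mul_of_nonneg_left (hgb v hv).1 (by positivity)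
    calc b u = (u ^ ε)⁻¹ * (u ^ ε * b u) := by field_simp
      _ ≤ (u ^ ε)⁻¹ * (C₁ / c₁ * (v ^ ε * b v)) := by gcongr
      _ = C₁ / c₁ * (v / u) ^ ε * b v := by rw [Real.div_rpow hv0.le hu0.le]; field_simp
      _ ≤ _ := by gcongr; exacts [le_max_left _ _, (div_le_iff₀ hu0).2 hvu]
  · have key : u ^ (-ε) * b u ≤ C₂ / c₂ * (v ^ (-ε) * b v) := calc
      u ^ (-ε) * b u ≤ C₂ * h u := (hhb u hu).2
      _ ≤ C₂ * h v := by gcongr; exact hh hv hu h_le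
      _ = C₂ / c₂ * (c₂ * h v) := by field_simp
      _ ≤ C₂ / c₂ * (v ^ (-ε) * b v) := mul_le_mul_of_nonneg_left (hhb v hv).1 (by positivity)
    calc b u = (u ^ (-ε))⁻¹ * (u ^ (-ε) * b u) := by field_simp
      _ ≤ (u ^ (-ε))⁻¹ * (C₂ / c₂ * (v ^ (-ε) * b v)) := by gcongr
      _ = C₂ / c₂ * (u / v) ^ ε * b v := by
        rw [Real.div_rpow hu0.le hv0.le, Real.rpow_neg hu0.le, Real.rpow_neg hv0.le]; field_simp
      _ ≤ _ := by gcongr; exacts [le_max_right _ _, (div_le_iff₀ hv0).2 huv]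

theorem gammaB_pos (hb : SlowlyVarying b) {t : ℝ} (ht : 0 < t) : 0 < gammaB b t :=
  hb.1 _ (one_le_max_self_inv ht)

theorem exists_potterBounds_gammaB (hb : SlowlyVarying b) {ε : ℝ} (hε : 0 < ε) :
    ∃ D > 0, PotterBounds (gammaB b) ε D := by
  obtain ⟨D, hD, hbD⟩ := hb.exists_le_mul_rpow_mul hε
  refine ⟨D, hD, fun s t hs hst => ?_⟩
  have ht : 0 < t := hs.trans_le hst
  have hk : 1 ≤ t / s := (one_le_div hs).2 hst
  -- `h₁`, `h₂` say `||log s| - |log t|| ≤ log (t / s)`, as `log (max t t⁻¹) = |log t|`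
  have h₁ : max s s⁻¹ ≤ t / s * max t t⁻¹ := by
    refine max_le ?_ ?_
    · calc s ≤ t := hst
        _ ≤ t / s * t := le_mul_of_one_le_left ht.le hk
        _ ≤ _ := by gcongr; exact le_max_left _ _
    · calc s⁻¹ = t / s * t⁻¹ := by field_simp
        _ ≤ _ := by gcongr; exact le_max_right _ _
  have h₂ : max t t⁻¹ ≤ t / s * max s s⁻¹ := by
    refine max_le ?_ ?_
    · calc t = t / s * s := by field_simp
        _ ≤ _ := by gcongr; exact le_max_left _ _
    · calc t⁻¹ ≤ s⁻¹ := inv_anti₀ hs hst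
        _ ≤ t / s * s⁻¹ := le_mul_of_one_le_left (by positivity) hk
        _ ≤ _ := by gcongr; exact le_max_right _ _
  have hγs := hbD (one_le_max_self_inv hs) (one_le_max_self_inv ht) h₁ h₂
  have hγt := hbD (one_le_max_self_inv ht) (one_le_max_self_inv hs) h₂ h₁
  simp only [gammaB] at hγs hγt ⊢
  constructor
  · calc s ^ ε * b (max s s⁻¹) ≤ s ^ ε * (D * (t / s) ^ ε * b (max t t⁻¹)) := by gcongr
      _ = D * (t ^ ε * b (max t t⁻¹)) := by
        rw [Real.div_rpow ht.le hs.le]; field_simp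
  · calc t ^ (-ε) * b (max t t⁻¹) ≤ t ^ (-ε) * (D * (t / s) ^ ε * b (max s s⁻¹)) := by gcongr
      _ = D * (s ^ (-ε) * b (max s s⁻¹)) := by
        rw [Real.div_rpow ht.le hs.le, Real.rpow_neg ht.le, Real.rpow_neg hs.le]; field_simp

end SlowlyVarying

namespace PotterBounds

variable {f : ℝ → ℝ} {ε D : ℝ}

theorem mul_le (h : PotterBounds f ε D) (hf : ∀ t, 0 < t → 0 ≤ f t) (hε : ε ≤ 1)
    {s t : ℝ} (hs : 0 < s) (hst : s ≤ t) : s * f s ≤ D * (t * f t) := by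
  have ht : 0 < t := hs.trans_le hst
  have hfs := hf s hs
  calc s * f s = s ^ (1 - ε) * (s ^ ε * f s) := by
        rw [← mul_assoc, ← Real.rpow_add hs]; simp
    _ ≤ t ^ (1 - ε) * (D * (t ^ ε * f t)) :=
        mul_le_mul (Real.rpow_le_rpow hs.le hst (by linarith)) (h hs hst).1 (by positivity)
          (by positivity)
    _ = D * (t * f t) := by
        rw [mul_left_comm, ← mul_assoc (t ^ (1 - ε)), ← Real.rpow_add ht]; simp

theorem rpow_one_add_mul_le (h : PotterBounds f ε D) {s t : ℝ} (hs : 0 < s) (hst : s ≤ t) :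
    s ^ (1 + ε) * (t ^ (-ε) * f t) ≤ D * (s * f s) := by
  calc s ^ (1 + ε) * (t ^ (-ε) * f t) ≤ s ^ (1 + ε) * (D * (s ^ (-ε) * f s)) :=
        mul_le_mul_of_nonneg_left (h hs hst).2 (by positivity)
    _ = D * (s * f s) := by
        rw [mul_left_comm, ← mul_assoc (s ^ (1 + ε)), ← Real.rpow_add hs]; simp

theorem ofReal_rpow_mul_rpow_le_tsum {ι : Type*} (h : PotterBounds f ε D)
    (hf : ∀ t, 0 < t → 0 ≤ f t) (hD : 0 ≤ D) (hε0 : 0 ≤ ε) (hε1 : ε ≤ 1) {θ : ℝ} (hθ : 0 < θ)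
    {T : ℝ} {t : ι → ℝ} (hT : 0 ≤ T) (ht : ∀ i, 0 ≤ t i)
    (hsum : ENNReal.ofReal (T ^ (θ * (1 + ε))) ≤ ∑' i, ENNReal.ofReal (t i ^ (θ * (1 + ε)))) :
    ENNReal.ofReal (T ^ θ * f T ^ θ) ≤
      ENNReal.ofReal (D ^ θ) * ∑' i, ENNReal.ofReal (t i ^ θ * f (t i) ^ θ) := by
  rcases hT.eq_or_lt with rfl | hT
  · simp [Real.zero_rpow hθ.ne']
  have hfT := hf T hT
  by_cases hex : ∃ j, T ≤ t j
  · obtain ⟨j, hj⟩ := hex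
    have hfj := hf _ (hT.trans_le hj)
    calc ENNReal.ofReal (T ^ θ * f T ^ θ) = ENNReal.ofReal ((T * f T) ^ θ) := by
          rw [Real.mul_rpow hT.le hfT]
      _ ≤ ENNReal.ofReal ((D * (t j * f (t j))) ^ θ) :=
          ENNReal.ofReal_le_ofReal (Real.rpow_le_rpow (by positivity) (h.mul_le hf hε1 hT hj) hθ.le)
      _ = ENNReal.ofReal (D ^ θ) * ENNReal.ofReal (t j ^ θ * f (t j) ^ θ) := by
          rw [Real.mul_rpow hD (mul_nonneg (ht j) hfj), Real.mul_rpow (ht j) hfj,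
            ENNReal.ofReal_mul (Real.rpow_nonneg hD θ)]
      _ ≤ _ := by gcongr; exact ENNReal.le_tsum j
  push Not at hex
  set a := (T ^ (-ε) * f T) ^ θ
  have hterm : ∀ i, ENNReal.ofReal (t i ^ (θ * (1 + ε))) * ENNReal.ofReal a ≤
      ENNReal.ofReal (D ^ θ) * ENNReal.ofReal (t i ^ θ * f (t i) ^ θ) := by
    intro i
    rcases (ht i).eq_or_lt with h0 | hti
    · rw [← h0, Real.zero_rpow (by positivity)]; simp
    have hfi := hf _ hti
    rw [← ENNReal.ofReal_mul (by positivity), ← ENNReal.ofReal_mul (Real.rpow_nonneg hD θ)]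
    apply ENNReal.ofReal_le_ofReal
    calc t i ^ (θ * (1 + ε)) * a = (t i ^ (1 + ε) * (T ^ (-ε) * f T)) ^ θ := by
          rw [Real.mul_rpow (by positivity) (by positivity), ← Real.rpow_mul (ht i), mul_comm θ]
      _ ≤ (D * (t i * f (t i))) ^ θ :=
          Real.rpow_le_rpow (by positivity) (h.rpow_one_add_mul_le hti (hex i).le) hθ.le
      _ = D ^ θ * (t i ^ θ * f (t i) ^ θ) := by
          rw [Real.mul_rpow hD (by positivity), Real.mul_rpow (ht i) hfi]
  calc ENNReal.ofReal (T ^ θ * f T ^ θ)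
      = ENNReal.ofReal (T ^ (θ * (1 + ε))) * ENNReal.ofReal a := by
        rw [← ENNReal.ofReal_mul (by positivity), ← Real.mul_rpow hT.le hfT, mul_comm θ,
          Real.rpow_mul hT.le, ← Real.mul_rpow (by positivity) (by positivity), ← mul_assoc,
          ← Real.rpow_add hT]
        simp
    _ ≤ (∑' i, ENNReal.ofReal (t i ^ (θ * (1 + ε)))) * ENNReal.ofReal a := by gcongr
    _ ≤ ∑' i, ENNReal.ofReal (D ^ θ) * ENNReal.ofReal (t i ^ θ * f (t i) ^ θ) := by
        rw [← ENNReal.tsum_mul_right]; exact ENNReal.tsum_le_tsum hterm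
    _ = _ := ENNReal.tsum_mul_left

end PotterBounds

theorem chiNorm_tsum_upper_general (μ : Measure Ω) [IsProbabilityMeasure μ]
    (p : Ω → ℝ) (pl pu : ℝ)
    (hp : ∀ᵐ ω ∂μ, pl ≤ p ω ∧ p ω ≤ pu)
    (b : ℝ → ℝ) (hb : SlowlyVarying b)
    (θ : ℝ) (hθ0 : 0 < θ) (hθp : θ < pl) (hθ1 : θ < 1) :
    ∃ C > (0:ℝ), ∀ A : ℕ → Set Ω, (∀ i, MeasurableSet (A i)) →
      ENNReal.ofReal
          (vLpNorm μ p (fun ω => ∑' i, (A i).indicator (1 : Ω → ℝ) ω) ^ θ *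
            gammaB b (vLpNorm μ p (fun ω => ∑' i, (A i).indicator (1 : Ω → ℝ) ω)) ^ θ) ≤
        ENNReal.ofReal C *
          ∑' i, ENNReal.ofReal
            (chiNorm μ p (A i) ^ θ * gammaB b (chiNorm μ p (A i)) ^ θ) := by
  obtain ⟨ε, hε0, hε1, hη⟩ : ∃ ε, 0 < ε ∧ ε ≤ 1 ∧ θ * (1 + ε) ≤ min pl 1 := by
    have hθm : θ < min pl 1 := lt_min hθp hθ1
    refine ⟨min 1 (min pl 1 / θ - 1), lt_min one_pos (by rwa [sub_pos, one_lt_div hθ0]),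
      min_le_left _ _, ?_⟩
    calc θ * (1 + min 1 (min pl 1 / θ - 1)) ≤ θ * (1 + (min pl 1 / θ - 1)) := by
          gcongr; exact min_le_right _ _
      _ = min pl 1 := by field_simp; ring
  obtain ⟨D, hD, hpotter⟩ := hb.exists_potterBounds_gammaB hε0
  refine ⟨D ^ θ, by positivity, fun A hA => ?_⟩
  have htriangle := ofReal_vLpNorm_tsum_indicator_rpow_le hA (by positivity)
    (hη.trans (min_le_right _ _)) (hp.mono fun ω h => (hη.trans (min_le_left _ _)).trans h.1)
  exact hpotter.ofReal_rpow_mul_rpow_le_tsum (fun t ht => (hb.gammaB_pos ht).le) hD.le hε0.le hε1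
    hθ0 (vLpNorm_nonneg μ p _) (fun i => chiNorm_nonneg μ p (A i)) htriangle

/-- For `0 < θ < min {p₋, 1}` and arbitrary measurable sets `(A_i)`,
`‖∑_i χ_{A_i}‖^θ γ_b^θ(‖∑_i χ_{A_i}‖) ≲ ∑_i ‖χ_{A_i}‖^θ γ_b^θ(‖χ_{A_i}‖)`. -/
theorem chiNorm_tsum_upper (μ : Measure Ω) [IsProbabilityMeasure μ]
    (p : Ω → ℝ) (pl pu : ℝ) (hpl : 0 < pl) (hple : pl ≤ pu)
    (hp : ∀ᵐ ω ∂μ, pl ≤ p ω ∧ p ω ≤ pu)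
    (b : ℝ → ℝ) (hb : SlowlyVarying b)
    (θ : ℝ) (hθ0 : 0 < θ) (hθp : θ < pl) (hθ1 : θ < 1) :
    ∃ C > (0:ℝ), ∀ A : ℕ → Set Ω, (∀ i, MeasurableSet (A i)) →
      ENNReal.ofReal
          (vLpNorm μ p (fun ω => ∑' i, (A i).indicator (1 : Ω → ℝ) ω) ^ θ *
            gammaB b (vLpNorm μ p (fun ω => ∑' i, (A i).indicator (1 : Ω → ℝ) ω)) ^ θ) ≤
        ENNReal.ofReal C *
          ∑' i, ENNReal.ofReal
            (chiNorm μ p (A i) ^ θ * gammaB b (chiNorm μ p (A i)) ^ θ) :=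
  chiNorm_tsum_upper_general μ p pl pu hp b hb θ hθ0 hθp hθ1
end
end

section
/- Let (X, ‖·‖) be a quasi-normed space with quasi-triangle constant K (i.e., ‖x+y‖ ≤ K(‖x‖+‖y‖)), and let α ∈ (0,1] be defined by (2K)^α = 2. Then for all n ≥ 1 and x₁, …, x_n ∈ X, ‖x₁ + ⋯ + x_n‖^α ≤ 4(‖x₁‖^α + ⋯ + ‖x_n‖^α) (Aoki–Rolewicz theorem). -/
open Multiset

/-- Dyadic lemma, distinct levels case: if `H p.1 ≤ 2^(-p.2)` with pairwise distinct
levels all at least `m`, then `H` of the sum is at most `2 * 2^(-m)`. -/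
lemma aoki_distinct {X : Type*} [AddCommGroup X] (H : X → ℝ) (h0 : H 0 = 0)
    (hmax : ∀ x y : X, H (x + y) ≤ 2 * max (H x) (H y)) :
    ∀ n : ℕ, ∀ S : Multiset (X × ℤ), S.card = n →
      (∀ p ∈ S, H p.1 ≤ (2:ℝ) ^ (-p.2)) → (S.map Prod.snd).Nodup →
      ∀ m : ℤ, (∀ p ∈ S, m ≤ p.2) →
      H (S.map Prod.fst).sum ≤ 2 * (2:ℝ) ^ (-m) := by
  classical
  intro n
  induction n with
  | zero =>
    intro S hc _ _ m _
    rw [Multiset.card_eq_zero] at hc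
    subst hc
    simp [h0]
    positivity
  | succ k ih =>
    intro S hc hb hd m hm
    have hS0 : S ≠ 0 := by
      intro h; subst h; simp at hc
    -- the finset of levels
    have hLne : ((S.map Prod.snd).toFinset).Nonempty := by
      rw [Multiset.toFinset_nonempty]
      simp [Multiset.map_eq_zero, hS0]
    set m₀ : ℤ := ((S.map Prod.snd).toFinset).min' hLne with hm₀def
    have hm₀mem : m₀ ∈ (S.map Prod.snd).toFinset := Finset.min'_mem _ _
    rw [Multiset.mem_toFinset, Multiset.mem_map] at hm₀mem
    obtain ⟨p₀, hp₀S, hp₀2⟩ := hm₀mem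
    have hmin : ∀ p ∈ S, m₀ ≤ p.2 := by
      intro p hp
      exact Finset.min'_le _ _ (Multiset.mem_toFinset.mpr (Multiset.mem_map_of_mem _ hp))
    set T := S.erase p₀ with hT
    have hST : S = p₀ ::ₘ T := (Multiset.cons_erase hp₀S).symm
    have hTcard : T.card = k := by
      have := hc; rw [hST] at this; simpa using this
    have hTnodup : (T.map Prod.snd).Nodup := by
      have : (p₀.2 ::ₘ T.map Prod.snd).Nodup := by
        rw [← Multiset.map_cons, ← hST]; exact hd
      exact (Multiset.nodup_cons.mp this).2
    have hnotmem : p₀.2 ∉ T.map Prod.snd := by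
      have : (p₀.2 ::ₘ T.map Prod.snd).Nodup := by
        rw [← Multiset.map_cons, ← hST]; exact hd
      exact (Multiset.nodup_cons.mp this).1
    have hTb : ∀ p ∈ T, H p.1 ≤ (2:ℝ) ^ (-p.2) := by
      intro p hp; exact hb p (by rw [hST]; exact Multiset.mem_cons_of_mem hp)
    have hTm : ∀ p ∈ T, m₀ + 1 ≤ p.2 := by
      intro p hp
      have h1 : m₀ ≤ p.2 := hmin p (by rw [hST]; exact Multiset.mem_cons_of_mem hp)
      have h2 : p.2 ≠ m₀ := by
        intro h
        exact hnotmem (by rw [hp₀2, ← h]; exact Multiset.mem_map_of_mem _ hp)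
      omega
    have hrest : H (T.map Prod.fst).sum ≤ 2 * (2:ℝ) ^ (-(m₀ + 1)) :=
      ih T hTcard hTb hTnodup (m₀ + 1) hTm
    have hsum : (S.map Prod.fst).sum = p₀.1 + (T.map Prod.fst).sum := by
      rw [hST, Multiset.map_cons, Multiset.sum_cons]
    have hmm₀ : m ≤ m₀ := by rw [← hp₀2]; exact hm p₀ hp₀S
    have hzle : (2:ℝ) ^ (-m₀) ≤ (2:ℝ) ^ (-m) :=
      zpow_le_zpow_right₀ (by norm_num) (by omega)
    have h1 : H p₀.1 ≤ (2:ℝ) ^ (-m) := by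
      calc H p₀.1 ≤ (2:ℝ) ^ (-p₀.2) := hb p₀ hp₀S
        _ = (2:ℝ) ^ (-m₀) := by rw [hp₀2]
        _ ≤ (2:ℝ) ^ (-m) := hzle
    have h2 : H (T.map Prod.fst).sum ≤ (2:ℝ) ^ (-m) := by
      calc H (T.map Prod.fst).sum ≤ 2 * (2:ℝ) ^ (-(m₀ + 1)) := hrest
        _ = (2:ℝ) ^ (-m₀) := by
            rw [show -(m₀+1) = -m₀ - 1 by ring, zpow_sub₀ (by norm_num : (2:ℝ) ≠ 0)]
            ring
        _ ≤ (2:ℝ) ^ (-m) := hzle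
    calc H (S.map Prod.fst).sum = H (p₀.1 + (T.map Prod.fst).sum) := by rw [hsum]
      _ ≤ 2 * max (H p₀.1) (H (T.map Prod.fst).sum) := hmax _ _
      _ ≤ 2 * (2:ℝ) ^ (-m) := by
          have := max_le h1 h2
          nlinarith [this]

/-- Dyadic lemma, general case: merge equal levels. -/
lemma aoki_merge {X : Type*} [AddCommGroup X] (H : X → ℝ) (h0 : H 0 = 0)
    (hnn : ∀ x, 0 ≤ H x)
    (hmax : ∀ x y : X, H (x + y) ≤ 2 * max (H x) (H y)) :
    ∀ n : ℕ, ∀ S : Multiset (X × ℤ), S.card = n →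
      (∀ p ∈ S, H p.1 ≤ (2:ℝ) ^ (-p.2)) →
      H (S.map Prod.fst).sum ≤ 2 * (S.map (fun p => (2:ℝ) ^ (-p.2))).sum := by
  classical
  intro n
  induction n using Nat.strong_induction_on with
  | _ n ih =>
  intro S hc hb
  by_cases hd : (S.map Prod.snd).Nodup
  · by_cases hS0 : S = 0
    · subst hS0; simp [h0]
    · have hLne : ((S.map Prod.snd).toFinset).Nonempty := by
        rw [Multiset.toFinset_nonempty]
        simp [Multiset.map_eq_zero, hS0]
      set m₀ : ℤ := ((S.map Prod.snd).toFinset).min' hLne with hm₀def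
      have hm₀mem : m₀ ∈ (S.map Prod.snd).toFinset := Finset.min'_mem _ _
      rw [Multiset.mem_toFinset, Multiset.mem_map] at hm₀mem
      obtain ⟨p₀, hp₀S, hp₀2⟩ := hm₀mem
      have hmin : ∀ p ∈ S, m₀ ≤ p.2 := by
        intro p hp
        exact Finset.min'_le _ _ (Multiset.mem_toFinset.mpr (Multiset.mem_map_of_mem _ hp))
      have hmain := aoki_distinct H h0 hmax n S hc hb hd m₀ hmin
      -- 2^(-m₀) ≤ weight sum
      have hw : (2:ℝ) ^ (-m₀) ≤ (S.map (fun p => (2:ℝ) ^ (-p.2))).sum := by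
        have hS' : S = p₀ ::ₘ S.erase p₀ := (Multiset.cons_erase hp₀S).symm
        rw [hS', Multiset.map_cons, Multiset.sum_cons, hp₀2]
        have : 0 ≤ ((S.erase p₀).map (fun p => (2:ℝ) ^ (-p.2))).sum := by
          apply Multiset.sum_nonneg
          intro a ha
          rw [Multiset.mem_map] at ha
          obtain ⟨p, _, rfl⟩ := ha
          positivity
        linarith
      calc H (S.map Prod.fst).sum ≤ 2 * (2:ℝ) ^ (-m₀) := hmain
        _ ≤ 2 * (S.map (fun p => (2:ℝ) ^ (-p.2))).sum := by linarith
  · -- duplicate levels: merge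
    rw [Multiset.nodup_iff_count_le_one] at hd
    push_neg at hd
    obtain ⟨ℓ, hℓ⟩ := hd
    have hcount : 2 ≤ Multiset.count ℓ (S.map Prod.snd) := hℓ
    rw [Multiset.count_map] at hcount
    set F := Multiset.filter (fun p => ℓ = Prod.snd p) S with hF
    have hFcard : 2 ≤ F.card := hcount
    have hFne : F ≠ 0 := by
      intro h; rw [h] at hFcard; simp at hFcard
    obtain ⟨p, hpF⟩ := Multiset.exists_mem_of_ne_zero hFne
    have hqex : ∃ q, q ∈ F.erase p := by
      apply Multiset.exists_mem_of_ne_zero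
      intro h
      have := Multiset.card_erase_of_mem hpF
      rw [h] at this
      simp at this
      omega
    obtain ⟨q, hqF⟩ := hqex
    have hpS : p ∈ S := Multiset.mem_of_mem_filter hpF
    have hpℓ : p.2 = ℓ := (Multiset.of_mem_filter hpF).symm
    have hqS : q ∈ S.erase p :=
      Multiset.mem_of_le (Multiset.erase_le_erase p (Multiset.filter_le _ S)) hqF
    have hqℓ : q.2 = ℓ := by
      have : q ∈ F := Multiset.mem_of_mem_erase hqF
      exact (Multiset.of_mem_filter this).symm
    set T := (S.erase p).erase q with hT
    have hS1 : S.erase p = q ::ₘ T := (Multiset.cons_erase hqS).symm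
    have hS2 : S = p ::ₘ q ::ₘ T := by
      rw [← hS1, Multiset.cons_erase hpS]
    set S' := ((p.1 + q.1, ℓ - 1) ::ₘ T) with hS'
    have hcard' : S'.card = n - 1 := by
      have h1 : S.card = n := hc
      rw [hS2] at h1
      simp at h1
      rw [hS']
      simp
      omega
    have hn2 : 2 ≤ n := by
      have : F.card ≤ S.card := Multiset.card_le_card (Multiset.filter_le _ S)
      omega
    have hb' : ∀ r ∈ S', H r.1 ≤ (2:ℝ) ^ (-r.2) := by
      intro r hr
      rw [hS', Multiset.mem_cons] at hr
      rcases hr with hr | hr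
      · subst hr
        have h1 : H p.1 ≤ (2:ℝ) ^ (-ℓ) := by rw [← hpℓ]; exact hb p hpS
        have h2 : H q.1 ≤ (2:ℝ) ^ (-ℓ) := by
          rw [← hqℓ]
          exact hb q (by rw [hS2]; exact Multiset.mem_cons_of_mem (Multiset.mem_cons_self _ _))
        calc H (p.1 + q.1) ≤ 2 * max (H p.1) (H q.1) := hmax _ _
          _ ≤ 2 * (2:ℝ) ^ (-ℓ) := by
              have := max_le h1 h2; nlinarith [this]
          _ = (2:ℝ) ^ (-(ℓ - 1)) := by
              rw [show -(ℓ-1) = -ℓ + 1 by ring, zpow_add₀ (by norm_num : (2:ℝ) ≠ 0)]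
              ring
      · exact hb r (by rw [hS2]
                       exact Multiset.mem_cons_of_mem (Multiset.mem_cons_of_mem hr))
    have hih := ih (n-1) (by omega) S' hcard' hb'
    have hsum : (S'.map Prod.fst).sum = (S.map Prod.fst).sum := by
      rw [hS2, hS']
      simp [Multiset.map_cons, Multiset.sum_cons]
      abel
    have hwt : (S'.map (fun p => (2:ℝ) ^ (-p.2))).sum
        = (S.map (fun p => (2:ℝ) ^ (-p.2))).sum := by
      have e : (2:ℝ) ^ (-(ℓ - 1)) = (2:ℝ) ^ (-ℓ) + (2:ℝ) ^ (-ℓ) := by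
        rw [show -(ℓ-1) = -ℓ + 1 by ring, zpow_add₀ (by norm_num : (2:ℝ) ≠ 0)]
        ring
      rw [hS2, hS']
      simp only [Multiset.map_cons, Multiset.sum_cons]
      show (2:ℝ) ^ (-(ℓ - 1)) + _ = (2:ℝ) ^ (-p.2) + ((2:ℝ) ^ (-q.2) + _)
      rw [hpℓ, hqℓ, e]
      ring
    rw [← hsum, ← hwt]
    exact hih

/-- Aoki–Rolewicz theorem: if `N` is a quasi-norm on `X` with quasi-triangle constant `K`
and `α ∈ (0,1]` satisfies `(2K)^α = 2`, then
`N (x₁ + ⋯ + x_n) ^ α ≤ 4 (N x₁ ^ α + ⋯ + N x_n ^ α)`. -/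
theorem aoki_rolewicz {X : Type*} [AddCommGroup X] [Module ℝ X]
    (N : X → ℝ) (K : ℝ) (hK : 1 ≤ K)
    (hN0 : ∀ x, 0 ≤ N x) (hNz : ∀ x, N x = 0 ↔ x = 0)
    (hNh : ∀ (c : ℝ) (x : X), N (c • x) = |c| * N x)
    (hNt : ∀ x y : X, N (x + y) ≤ K * (N x + N y))
    (α : ℝ) (hα0 : 0 < α) (hα1 : α ≤ 1) (hαK : (2 * K) ^ α = 2) :
    ∀ (n : ℕ) (x : Fin n → X), 1 ≤ n →
      N (∑ i, x i) ^ α ≤ 4 * ∑ i, N (x i) ^ α := by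
  intro n x _
  classical
  set H : X → ℝ := fun y => N y ^ α with hH
  have h0 : H 0 = 0 := by
    simp only [hH]
    rw [(hNz 0).mpr rfl, Real.zero_rpow (ne_of_gt hα0)]
  have hnn : ∀ y, 0 ≤ H y := fun y => Real.rpow_nonneg (hN0 y) α
  have hmax : ∀ y z : X, H (y + z) ≤ 2 * max (H y) (H z) := by
    intro y z
    have hM : N (y + z) ≤ (2 * K) * max (N y) (N z) := by
      calc N (y + z) ≤ K * (N y + N z) := hNt y z
        _ ≤ K * (2 * max (N y) (N z)) := by
            have h1 : N y ≤ max (N y) (N z) := le_max_left _ _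
            have h2 : N z ≤ max (N y) (N z) := le_max_right _ _
            nlinarith
        _ = (2 * K) * max (N y) (N z) := by ring
    have hMnn : 0 ≤ max (N y) (N z) := le_trans (hN0 y) (le_max_left _ _)
    have h2K : (0:ℝ) ≤ 2 * K := by linarith
    calc H (y + z) = N (y + z) ^ α := rfl
      _ ≤ ((2 * K) * max (N y) (N z)) ^ α :=
          Real.rpow_le_rpow (hN0 _) hM (le_of_lt hα0)
      _ = (2 * K) ^ α * (max (N y) (N z)) ^ α := Real.mul_rpow h2K hMnn
      _ = 2 * (max (N y) (N z)) ^ α := by rw [hαK]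
      _ = 2 * max (H y) (H z) := by
          congr 1
          rcases le_total (N y) (N z) with h | h
          · rw [max_eq_right h, max_eq_right]
            exact Real.rpow_le_rpow (hN0 y) h (le_of_lt hα0)
          · rw [max_eq_left h, max_eq_left]
            exact Real.rpow_le_rpow (hN0 z) h (le_of_lt hα0)
  -- levels
  set ℓ : Fin n → ℤ := fun i => -(Int.log 2 (H (x i))) - 1 with hℓ
  have hlev : ∀ i, x i ≠ 0 → H (x i) ≤ (2:ℝ) ^ (-(ℓ i)) ∧ (2:ℝ) ^ (-(ℓ i)) ≤ 2 * H (x i) := by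
    intro i hi
    have hNpos : 0 < N (x i) := by
      rcases lt_or_eq_of_le (hN0 (x i)) with h | h
      · exact h
      · exact absurd ((hNz (x i)).mp h.symm) hi
    have hHpos : 0 < H (x i) := Real.rpow_pos_of_pos hNpos α
    constructor
    · have := Int.lt_zpow_succ_log_self (by norm_num : 1 < 2) (H (x i))
      have heq : (-(ℓ i) : ℤ) = Int.log 2 (H (x i)) + 1 := by simp only [hℓ]; omega
      rw [heq]
      exact_mod_cast le_of_lt (by exact_mod_cast this)
    · have hlog := Int.zpow_log_le_self (by norm_num : 1 < 2) hHpos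
      have heq : (-(ℓ i) : ℤ) = Int.log 2 (H (x i)) + 1 := by simp only [hℓ]; omega
      rw [heq, zpow_add₀ (by norm_num : (2:ℝ) ≠ 0)]
      have : ((2:ℝ)) ^ (Int.log 2 (H (x i))) ≤ H (x i) := by exact_mod_cast hlog
      nlinarith
  set s : Finset (Fin n) := Finset.univ.filter (fun i => x i ≠ 0) with hs
  set S : Multiset (X × ℤ) := s.val.map (fun i => (x i, ℓ i)) with hSdef
  have hb : ∀ p ∈ S, H p.1 ≤ (2:ℝ) ^ (-p.2) := by
    intro p hp
    rw [hSdef, Multiset.mem_map] at hp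
    obtain ⟨i, hi, rfl⟩ := hp
    have hi'' : i ∈ s := Finset.mem_val.mp hi
    have hi' : x i ≠ 0 := by
      rw [hs] at hi''
      exact (Finset.mem_filter.mp hi'').2
    exact (hlev i hi').1
  have hA := aoki_merge H h0 hnn hmax S.card S rfl hb
  have hsumeq : (S.map Prod.fst).sum = ∑ i, x i := by
    rw [hSdef, Multiset.map_map]
    have : (s.val.map (Prod.fst ∘ fun i => (x i, ℓ i))).sum = ∑ i ∈ s, x i := rfl
    rw [this, hs]
    exact Finset.sum_filter_ne_zero _
  have hwle : (S.map (fun p => (2:ℝ) ^ (-p.2))).sum ≤ 2 * ∑ i, H (x i) := by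
    rw [hSdef, Multiset.map_map]
    have h1 : ((s.val.map ((fun p : X × ℤ => (2:ℝ) ^ (-p.2)) ∘ fun i => (x i, ℓ i)))).sum
        = ∑ i ∈ s, (2:ℝ) ^ (-(ℓ i)) := rfl
    rw [h1]
    have h2 : ∑ i ∈ s, (2:ℝ) ^ (-(ℓ i)) ≤ ∑ i ∈ s, 2 * H (x i) := by
      apply Finset.sum_le_sum
      intro i hi
      have hi' : x i ≠ 0 := by
        rw [hs] at hi
        simpa using (Finset.mem_filter.mp hi).2
      exact (hlev i hi').2
    have h3 : ∑ i ∈ s, 2 * H (x i) ≤ ∑ i, 2 * H (x i) := by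
      apply Finset.sum_le_sum_of_subset_of_nonneg
      · rw [hs]; exact Finset.filter_subset _ _
      · intro i _ _
        have := hnn (x i)
        linarith
    have h4 : ∑ i, 2 * H (x i) = 2 * ∑ i, H (x i) := by
      rw [Finset.mul_sum]
    linarith [h2, h3]
  calc N (∑ i, x i) ^ α = H (S.map Prod.fst).sum := by rw [hsumeq]
    _ ≤ 2 * (S.map (fun p => (2:ℝ) ^ (-p.2))).sum := hA
    _ ≤ 2 * (2 * ∑ i, H (x i)) := by linarith
    _ = 4 * ∑ i, N (x i) ^ α := by rw [hH]; ring
end
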